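/- For all natural numbers n ≥ k, F_{n,k} = |(d^k/dX^k binom(X,n))(0)|, i.e. F_{n,k} is the absolute value of the k-th derivative of the polynomial X(X-1)⋯(X-n+1)/n! evaluated at 0. -/

import Mathlib

open Polynomial

/-- `F n k = ∑ 1/(i₁⋯i_k)` over ordered `k`-tuples of positive integers with sum `n`. -/
def F (n k : ℕ) : ℚ :=
  ∑ f ∈ (Finset.Nat.antidiagonalTuple k n).filter (fun f => ∀ j, f j ≠ 0),
    ∏ j, (1 : ℚ) / (f j : ℚ)

/-- The binomial coefficient polynomial `binom(X,n) = X(X-1)⋯(X-n+1)/n!` in `ℚ[X]`. -/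
noncomputable def B (n : ℕ) : Polynomial ℚ :=
  C (1 / (n.factorial : ℚ)) * ∏ i ∈ Finset.range n, (X - C (i : ℚ))

/-!
Both sides equal `k! c(n,k) / n!`, where `c(n,k)` is the unsigned Stirling number of the first
kind. On the polynomial side, `X(X-1)⋯(X-n+1) = ∑ₖ (-1)^(n+k) c(n,k) Xᵏ`. On the other side,
`F n k` is the `n`-th coefficient of `Lᵏ`, where `L = ∑ Xⁱ / i = -log(1 - X)`. Since
`(1 - X) L' = 1`, differentiating `Lᵏ⁺¹` gives `(n+1) F(n+1,k+1) = (k+1) F(n,k) + n F(n,k+1)`,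
which after scaling by `n!` is the Stirling recurrence `c(n+1,k+1) = n c(n,k+1) + c(n,k)`.
-/

open Nat

theorem prod_range_X_sub_natCast_eq_descPochhammer {R : Type*} [CommRing R] (n : ℕ) :
    ∏ i ∈ Finset.range n, (X - C (i : R)) = descPochhammer R n := by
  induction n with
  | zero => simp
  | succ n ih => rw [Finset.prod_range_succ, ih, descPochhammer_succ_right, map_natCast]

theorem coeff_descPochhammer {R : Type*} [CommRing R] (n k : ℕ) :
    (descPochhammer R n).coeff k = (-1) ^ (n + k) * stirlingFirst n k := by
  induction n generalizing k with
  | zero => cases k <;> simp [coeff_one]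
  | succ n ih =>
    rw [descPochhammer_succ_right, ← map_natCast C]
    cases k with
    | zero => cases n <;> simp [mul_coeff_zero, ih]
    | succ k =>
      rw [coeff_mul_X_sub_C, ih, ih, stirlingFirst_succ_succ]
      push_cast
      ring

namespace PowerSeries

theorem coeff_pow_eq_sum_antidiagonalTuple {R : Type*} [CommSemiring R] (p : R⟦X⟧) (k n : ℕ) :
    coeff n (p ^ k) = ∑ f ∈ Finset.Nat.antidiagonalTuple k n, ∏ j, coeff (f j) p := by
  rw [← Fin.prod_const, coeff_prod]
  refine Finset.sum_nbij' (⇑) Finsupp.equivFunOnFinite.symm ?_ ?_ ?_ ?_ ?_ <;>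
    simp [Finset.Nat.mem_antidiagonalTuple]

variable {K : Type*} [Field K]

noncomputable def negLogOneSub : K⟦X⟧ := mk fun i => (i : K)⁻¹

theorem derivative_negLogOneSub [CharZero K] : d⁄dX K negLogOneSub = mk 1 := by
  ext n
  rw [coeff_derivative, negLogOneSub, coeff_mk, coeff_mk, Pi.one_apply, Nat.cast_succ,
    inv_mul_cancel₀ n.cast_add_one_ne_zero]

theorem succ_mul_coeff_succ_negLogOneSub_pow_succ [CharZero K] (n k : ℕ) :
    (n + 1) * coeff (n + 1) (negLogOneSub ^ (k + 1) : K⟦X⟧) =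
      (k + 1) * coeff n (negLogOneSub ^ k : K⟦X⟧) +
        n * coeff n (negLogOneSub ^ (k + 1) : K⟦X⟧) := by
  have h : (1 - X) * d⁄dX K (negLogOneSub ^ (k + 1)) = (k + 1) • negLogOneSub ^ k := by
    rw [Derivation.leibniz_pow, mul_smul_comm, mul_smul_comm, derivative_negLogOneSub,
      mul_comm (1 - X), mk_one_mul_one_sub_eq_one, smul_eq_mul, mul_one, add_tsub_cancel_right]
  have hn := congrArg (coeff n) h
  rw [sub_mul, one_mul, map_sub, coeff_derivative, map_nsmul, nsmul_eq_mul] at hn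
  cases n with
  | zero => simpa using hn
  | succ n =>
    rw [coeff_succ_X_mul, coeff_derivative] at hn
    push_cast at hn ⊢
    linear_combination hn

theorem factorial_mul_coeff_negLogOneSub_pow [CharZero K] (n k : ℕ) :
    (n ! : K) * coeff n (negLogOneSub ^ k) = k ! * stirlingFirst n k := by
  induction n generalizing k with
  | zero => cases k <;> simp [coeff_zero_eq_constantCoeff, negLogOneSub]
  | succ n ih =>
    cases k with
    | zero => simp [coeff_one]
    | succ k =>
      rw [factorial_succ n, factorial_succ k, stirlingFirst_succ_succ]
      have ih' := ih (k + 1)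
      rw [factorial_succ k] at ih'
      push_cast at ih' ⊢
      linear_combination (n ! : K) * succ_mul_coeff_succ_negLogOneSub_pow_succ (K := K) n k
        + (k + 1) * ih k + n * ih'

end PowerSeries

theorem F_eq_coeff_negLogOneSub_pow (n k : ℕ) :
    F n k = PowerSeries.coeff n (PowerSeries.negLogOneSub ^ k) := by
  rw [PowerSeries.coeff_pow_eq_sum_antidiagonalTuple, F, Finset.sum_filter_of_ne]
  · simp [PowerSeries.negLogOneSub]
  · -- a tuple with a zero entry contributes `1 / 0 = 0`
    intro f _ hf j hj
    exact hf (Finset.prod_eq_zero (Finset.mem_univ j) (by simp [hj]))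

theorem F_eq_factorial_mul_stirlingFirst_div (n k : ℕ) :
    F n k = k ! * stirlingFirst n k / n ! := by
  rw [F_eq_coeff_negLogOneSub_pow, eq_div_iff (by positivity), mul_comm,
    PowerSeries.factorial_mul_coeff_negLogOneSub_pow]

theorem iterate_derivative_B_eval_zero (n k : ℕ) :
    (derivative^[k] (B n)).eval 0 = (-1) ^ (n + k) * (k ! * stirlingFirst n k / n !) := by
  rw [← coeff_zero_eq_eval_zero, coeff_iterate_derivative, zero_add, descFactorial_self,
    nsmul_eq_mul, B, coeff_C_mul, prod_range_X_sub_natCast_eq_descPochhammer,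
    coeff_descPochhammer]
  ring

theorem F_eq_abs_iterated_derivative_general (n k : ℕ) :
    F n k = |(derivative^[k] (B n)).eval 0| := by
  rw [iterate_derivative_B_eval_zero, abs_mul, abs_neg_one_pow, one_mul,
    abs_of_nonneg (by positivity), F_eq_factorial_mul_stirlingFirst_div]

theorem F_eq_abs_iterated_derivative (n k : ℕ) (h : k ≤ n) :
    F n k = |(derivative^[k] (B n)).eval 0| :=
  F_eq_abs_iterated_derivative_general n k
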